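/- Suppose each f_i is convex with L_i-Lipschitz gradient, L = max_i L_i, and 0 < c < 1/(2L·λ_max(𝕃)), where λ_max(𝕃) is the largest eigenvalue of 𝕃. Then any Mirror-EXTRA trajectory (x^k, q^k) satisfies, for all k ≥ 0, c‖q^{k+1} − q^{k+2}‖_F² + (2/(L·λ_max(𝕃)) − 3c)‖∇f(x^{k+1}) − ∇f(x^{k+2})‖_𝕃² ≤ c‖q^k − q^{k+1}‖_F² + (2/(L·λ_max(𝕃)) − 3c)‖∇f(x^k) − ∇f(x^{k+1})‖_𝕃². -/

import Mathlib

/-!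
Each `∇fᵢ` is `1/L`-cocoercive (convexity plus `L`-smoothness, by the Baillon–Haddad argument).
Summing over rows and using `‖U D‖_F² ≤ λ_max ‖D‖_F²` gives
`‖U (∇f(x^{k+1}) - ∇f(x^{k+2}))‖_F² / (L λ_max) ≤ ⟪∇f(x^{k+1}) - ∇f(x^{k+2}), x^{k+1} - x^{k+2}⟫`.
The recursion gives `x^{k+1} - x^{k+2} = c 𝕃 (2 ∇f(x^{k+1}) - ∇f(x^k))` and
`q^j - q^{j+1} = -U ∇f(x^{j+1})`, so with `u, v, w := U ∇f(x^k), U ∇f(x^{k+1}), U ∇f(x^{k+2})` the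
inequality reads `‖v - w‖² / (L λ_max) ≤ c ⟪v - w, 2v - u⟫`. Polarization and `4c ≤ 2/(L λ_max)`
turn this into the decrease of `c ‖w‖² + (2/(L λ_max) - 3c) ‖v - w‖²`.
-/

open Matrix

noncomputable section

/-- Squared Frobenius norm. -/
def frobSq {m p : ℕ} (A : Matrix (Fin m) (Fin p) ℝ) : ℝ := ∑ i, ∑ j, (A i j) ^ 2

/-- Squared `P`-weighted seminorm `⟨A, P A⟩ = tr(Aᵀ P A)`. -/
def wSq {m p : ℕ} (P : Matrix (Fin m) (Fin m) ℝ) (A : Matrix (Fin m) (Fin p) ℝ) : ℝ :=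
  Matrix.trace (Aᵀ * P * A)

/-- Squared Euclidean norm of a vector. -/
def enormSq {p : ℕ} (u : Fin p → ℝ) : ℝ := ∑ j, (u j) ^ 2

/-- The matrix whose `i`-th row is `∇fᵢ(xᵢ)`, given the gradient maps `g i`. -/
def gradMat {n p : ℕ} (g : Fin n → (Fin p → ℝ) → (Fin p → ℝ))
    (x : Matrix (Fin n) (Fin p) ℝ) : Matrix (Fin n) (Fin p) ℝ :=
  Matrix.of fun i => g i (x i)

open Set
open scoped RealInnerProductSpace

section SmoothConvex

variable {E : Type*} [NormedAddCommGroup E] [InnerProductSpace ℝ E] [CompleteSpace E]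
  {F : E → ℝ} {G : E → E} {g x y : E} {L : ℝ}

lemma HasGradientAt.hasDerivAt_lineMap {t : ℝ}
    (hF : HasGradientAt F g (AffineMap.lineMap x y t)) :
    HasDerivAt (fun s : ℝ => F (AffineMap.lineMap x y s)) ⟪g, y - x⟫ t := by
  have := hF.hasFDerivAt.comp_hasDerivAt t AffineMap.hasDerivAt_lineMap
  simp only [InnerProductSpace.toDual_apply_apply] at this
  exact this

theorem ConvexOn.add_inner_le_of_hasGradientAt (hconv : ConvexOn ℝ univ F)
    (hF : HasGradientAt F g x) (y : E) : F x + ⟪g, y - x⟫ ≤ F y := by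
  have hd : HasDerivAt (fun s : ℝ => F (AffineMap.lineMap x y s)) ⟪g, y - x⟫ 0 :=
    HasGradientAt.hasDerivAt_lineMap (by rwa [AffineMap.lineMap_apply_zero])
  have := (hconv.comp_affineMap (AffineMap.lineMap x y)).le_slope_of_hasDerivAt
    (mem_univ 0) (mem_univ 1) one_pos hd
  simp only [slope_def_field, Function.comp_apply, AffineMap.lineMap_apply_one,
    AffineMap.lineMap_apply_zero, sub_zero, div_one] at this
  linarith

theorem le_add_inner_add_of_lipschitz_gradient (hF : ∀ w, HasGradientAt F (G w) w)
    (hG : ∀ u v, ‖G u - G v‖ ≤ L * ‖u - v‖) (x y : E) :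
    F y ≤ F x + ⟪G x, y - x⟫ + L / 2 * ‖y - x‖ ^ 2 := by
  set h : ℝ → ℝ := fun t =>
    F (AffineMap.lineMap x y t) - t * ⟪G x, y - x⟫ - L / 2 * t ^ 2 * ‖y - x‖ ^ 2 with hh
  have hderiv : ∀ t, HasDerivAt h
      (⟪G (AffineMap.lineMap x y t) - G x, y - x⟫ - L * t * ‖y - x‖ ^ 2) t := fun t => by
    refine (((hF _).hasDerivAt_lineMap.sub ((hasDerivAt_id t).mul_const _)).sub
      (((hasDerivAt_pow 2 t).const_mul (L / 2)).mul_const (‖y - x‖ ^ 2))).congr_deriv ?_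
    rw [inner_sub_left]
    ring
  have hanti : AntitoneOn h (Icc 0 1) := by
    refine antitoneOn_of_hasDerivWithinAt_nonpos (convex_Icc 0 1)
      (fun t _ => (hderiv t).continuousAt.continuousWithinAt)
      (fun t _ => (hderiv t).hasDerivWithinAt) fun t ht => ?_
    rw [interior_Icc] at ht
    have hGt : ‖G (AffineMap.lineMap x y t) - G x‖ ≤ L * (t * ‖y - x‖) := by
      simpa [AffineMap.lineMap_apply_module', norm_smul, abs_of_pos ht.1] using
        hG (AffineMap.lineMap x y t) x
    nlinarith [real_inner_le_norm (G (AffineMap.lineMap x y t) - G x) (y - x),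
      norm_nonneg (y - x)]
  have := hanti (left_mem_Icc.2 zero_le_one) (right_mem_Icc.2 zero_le_one) zero_le_one
  simp only [hh, AffineMap.lineMap_apply_one, AffineMap.lineMap_apply_zero, one_mul, one_pow,
    mul_one, zero_mul, zero_pow two_ne_zero, mul_zero, sub_zero] at this
  linarith

theorem ConvexOn.add_inner_add_sq_le (hconv : ConvexOn ℝ univ F)
    (hF : ∀ w, HasGradientAt F (G w) w) (hL : 0 < L) (hG : ∀ u v, ‖G u - G v‖ ≤ L * ‖u - v‖)
    (u v : E) : F v + ⟪G v, u - v⟫ + 1 / (2 * L) * ‖G u - G v‖ ^ 2 ≤ F u := by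
  -- `φ := F - ⟪G v, ·⟫` is convex, `L`-smooth and minimal at `v`; compare `φ v` with `φ` after
  -- one gradient step from `u`.
  set φ : E → ℝ := fun w => F w - ⟪G v, w⟫
  have hφ : ∀ w, HasGradientAt φ (G w - G v) w := fun w => by
    rw [hasGradientAt_iff_hasFDerivAt, map_sub]
    exact (hF w).hasFDerivAt.sub (InnerProductSpace.toDual ℝ E (G v)).hasFDerivAt
  have hφconv : ConvexOn ℝ univ φ := hconv.sub ((innerₛₗ ℝ (G v)).concaveOn convex_univ)
  set z := u - (1 / L) • (G u - G v)
  have hmin : φ v ≤ φ z := by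
    simpa using hφconv.add_inner_le_of_hasGradientAt (hφ v) z
  have hdesc := le_add_inner_add_of_lipschitz_gradient hφ (fun a b => by simpa using hG a b) u z
  have hz : z - u = -((1 / L) • (G u - G v)) := by simp [z]
  rw [hz, inner_neg_right, real_inner_smul_right, real_inner_self_eq_norm_sq, norm_neg, norm_smul,
    Real.norm_of_nonneg (by positivity)] at hdesc
  have : L / 2 * (1 / L * ‖G u - G v‖) ^ 2 - 1 / L * ‖G u - G v‖ ^ 2
      = -(1 / (2 * L) * ‖G u - G v‖ ^ 2) := by
    field_simp
    ring
  simp only [φ, inner_sub_right] at hmin hdesc ⊢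
  linarith

theorem ConvexOn.cocoercive_gradient (hconv : ConvexOn ℝ univ F)
    (hF : ∀ w, HasGradientAt F (G w) w) (hL : 0 < L) (hG : ∀ u v, ‖G u - G v‖ ≤ L * ‖u - v‖)
    (u v : E) : 1 / L * ‖G u - G v‖ ^ 2 ≤ ⟪G u - G v, u - v⟫ := by
  have h₁ := hconv.add_inner_add_sq_le hF hL hG u v
  have h₂ := hconv.add_inner_add_sq_le hF hL hG v u
  rw [norm_sub_rev] at h₂
  have : 1 / L * ‖G u - G v‖ ^ 2 = 2 * (1 / (2 * L) * ‖G u - G v‖ ^ 2) := by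
    field_simp
  simp only [inner_sub_left, inner_sub_right] at h₁ h₂ ⊢
  linarith

end SmoothConvex

lemma norm_toLp_sq_eq_enormSq {p : ℕ} (w : Fin p → ℝ) : ‖WithLp.toLp 2 w‖ ^ 2 = enormSq w := by
  simp [EuclideanSpace.real_norm_sq_eq, enormSq]

theorem ConvexOn.cocoercive_of_hasGradientAt_euclidean {p : ℕ} {f : (Fin p → ℝ) → ℝ}
    {g : (Fin p → ℝ) → Fin p → ℝ}
    (hgrad : ∀ u, HasGradientAt (fun v : EuclideanSpace ℝ (Fin p) => f (WithLp.equiv 2 _ v))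
      ((WithLp.equiv 2 _).symm (g u)) ((WithLp.equiv 2 _).symm u))
    (hconv : ConvexOn ℝ univ f) {L : ℝ} (hL : 0 < L)
    (hlip : ∀ u v, enormSq (g u - g v) ≤ L ^ 2 * enormSq (u - v)) (u v : Fin p → ℝ) :
    1 / L * enormSq (g u - g v) ≤ (g u - g v) ⬝ᵥ (u - v) := by
  have hF : ∀ w : EuclideanSpace ℝ (Fin p),
      HasGradientAt (fun v => f v.ofLp) (WithLp.toLp 2 (g w.ofLp)) w := fun w => by
    simpa using hgrad w.ofLp
  have hG : ∀ a b : EuclideanSpace ℝ (Fin p),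
      ‖WithLp.toLp 2 (g a.ofLp) - WithLp.toLp 2 (g b.ofLp)‖ ≤ L * ‖a - b‖ := fun a b => by
    rw [← pow_le_pow_iff_left₀ (norm_nonneg _) (by positivity) two_ne_zero, mul_pow,
      ← WithLp.toLp_sub, norm_toLp_sq_eq_enormSq, ← a.toLp_ofLp, ← b.toLp_ofLp,
      ← WithLp.toLp_sub, norm_toLp_sq_eq_enormSq]
    exact hlip _ _
  have := (hconv.comp_linearMap (WithLp.linearEquiv 2 ℝ (Fin p → ℝ)).toLinearMap
    ).cocoercive_gradient hF hL hG (WithLp.toLp 2 u) (WithLp.toLp 2 v)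
  simpa [← WithLp.toLp_sub, norm_toLp_sq_eq_enormSq, EuclideanSpace.inner_toLp_toLp,
    dotProduct_comm] using this

section FrobeniusInner

variable {m n p : Type*} [Fintype m] [Fintype n] [Fintype p]

def frobInner (A B : Matrix m n ℝ) : ℝ := ∑ i, A i ⬝ᵥ B i

lemma frobInner_eq_trace (A B : Matrix m n ℝ) : frobInner A B = trace (Aᵀ * B) := by
  simp only [frobInner, trace, diag, mul_apply, transpose_apply, dotProduct]
  exact Finset.sum_comm

lemma frobInner_comm (A B : Matrix m n ℝ) : frobInner A B = frobInner B A := by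
  simp only [frobInner, dotProduct_comm]

@[simp] lemma frobInner_sub_left (A B C : Matrix m n ℝ) :
    frobInner (A - B) C = frobInner A C - frobInner B C := by
  simp only [frobInner, ← Finset.sum_sub_distrib, ← sub_dotProduct]
  rfl

@[simp] lemma frobInner_sub_right (A B C : Matrix m n ℝ) :
    frobInner A (B - C) = frobInner A B - frobInner A C := by
  simp only [frobInner, ← Finset.sum_sub_distrib, ← dotProduct_sub]
  rfl

@[simp] lemma frobInner_smul_right (c : ℝ) (A B : Matrix m n ℝ) :
    frobInner A (c • B) = c * frobInner A B := by
  rw [frobInner, frobInner, Finset.mul_sum]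
  exact Finset.sum_congr rfl fun i _ => dotProduct_smul c (A i) (B i)

@[simp] lemma frobInner_nsmul_right (k : ℕ) (A B : Matrix m n ℝ) :
    frobInner A (k • B) = k * frobInner A B := by
  rw [← Nat.cast_smul_eq_nsmul ℝ, frobInner_smul_right]

lemma frobInner_mul_left (M : Matrix p m ℝ) (A : Matrix m n ℝ) (B : Matrix p n ℝ) :
    frobInner (M * A) B = frobInner A (Mᵀ * B) := by
  rw [frobInner_eq_trace, frobInner_eq_trace, transpose_mul, Matrix.mul_assoc]

end FrobeniusInner

section FrobeniusNorm

variable {m p : ℕ}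

lemma frobSq_eq_frobInner (A : Matrix (Fin m) (Fin p) ℝ) : frobSq A = frobInner A A := by
  simp [frobSq, frobInner, dotProduct, sq]

lemma frobSq_nonneg (A : Matrix (Fin m) (Fin p) ℝ) : 0 ≤ frobSq A := by
  unfold frobSq
  positivity

@[simp] lemma frobSq_neg (A : Matrix (Fin m) (Fin p) ℝ) : frobSq (-A) = frobSq A := by
  simp [frobSq]

lemma wSq_transpose_mul_self {k : ℕ} (U : Matrix (Fin k) (Fin m) ℝ)
    (A : Matrix (Fin m) (Fin p) ℝ) : wSq (Uᵀ * U) A = frobSq (U * A) := by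
  rw [wSq, frobSq_eq_frobInner, frobInner_mul_left, frobInner_eq_trace, Matrix.mul_assoc,
    Matrix.mul_assoc]

lemma wSq_le_mul_frobSq {P : Matrix (Fin m) (Fin m) ℝ} {μ : ℝ} (hP : (μ • 1 - P).PosSemidef)
    (A : Matrix (Fin m) (Fin p) ℝ) : wSq P A ≤ μ * frobSq A := by
  have := (hP.conjTranspose_mul_mul_same A).trace_nonneg
  rw [conjTranspose_eq_transpose_of_trivial, Matrix.mul_sub, Matrix.sub_mul, trace_sub,
    Matrix.mul_smul, Matrix.mul_one, Matrix.smul_mul, trace_smul, smul_eq_mul] at this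
  rw [wSq, frobSq_eq_frobInner, frobInner_eq_trace]
  linarith

end FrobeniusNorm

theorem Matrix.IsHermitian.posSemidef_smul_one_sub {n : Type*} [Fintype n] [DecidableEq n]
    {A : Matrix n n ℝ} (hA : A.IsHermitian) {μ : ℝ}
    (hμ : ∀ (ν : ℝ) (v : n → ℝ), v ≠ 0 → A *ᵥ v = ν • v → ν ≤ μ) : (μ • 1 - A).PosSemidef := by
  have hB : (μ • 1 - A).IsHermitian := (isHermitian_one.smul (IsSelfAdjoint.all μ)).sub hA
  refine hB.posSemidef_iff_eigenvalues_nonneg.2 fun i => ?_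
  set b := hB.eigenvectorBasis i
  have hb : b.ofLp ≠ 0 :=
    (not_congr (WithLp.ofLp_eq_zero 2)).2 (hB.eigenvectorBasis.orthonormal.ne_zero i)
  have hAb : A *ᵥ b.ofLp = (μ - hB.eigenvalues i) • b.ofLp := by
    have := hB.mulVec_eigenvectorBasis i
    rw [sub_mulVec, smul_mulVec, one_mulVec] at this
    rw [sub_smul, ← this]
    abel
  simpa using hμ _ _ hb hAb

theorem frobSq_gradMat_sub_le_frobInner {n p : ℕ} {f : Fin n → (Fin p → ℝ) → ℝ}
    {g : Fin n → (Fin p → ℝ) → Fin p → ℝ}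
    (hgrad : ∀ i u, HasGradientAt (fun v : EuclideanSpace ℝ (Fin p) => f i (WithLp.equiv 2 _ v))
      ((WithLp.equiv 2 _).symm (g i u)) ((WithLp.equiv 2 _).symm u))
    (hconv : ∀ i, ConvexOn ℝ univ (f i)) {Li : Fin n → ℝ} (hLpos : ∀ i, 0 < Li i)
    (hlip : ∀ i u v, enormSq (g i u - g i v) ≤ Li i ^ 2 * enormSq (u - v)) {L : ℝ}
    (hLi : ∀ i, Li i ≤ L) (x y : Matrix (Fin n) (Fin p) ℝ) :
    1 / L * frobSq (gradMat g x - gradMat g y) ≤ frobInner (gradMat g x - gradMat g y) (x - y) := by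
  have hrow : ∀ i u v, 1 / L * enormSq (g i u - g i v) ≤ (g i u - g i v) ⬝ᵥ (u - v) :=
    fun i => (hconv i).cocoercive_of_hasGradientAt_euclidean (hgrad i)
      ((hLpos i).trans_le (hLi i)) fun u v => (hlip i u v).trans <| mul_le_mul_of_nonneg_right
        (pow_le_pow_left₀ (hLpos i).le (hLi i) 2) (by unfold enormSq; positivity)
  rw [frobSq, Finset.mul_sum]
  exact Finset.sum_le_sum fun i _ => hrow i (x i) (y i)

theorem weighted_frobSq_le_of_le_frobInner {m p : ℕ} {u v w : Matrix (Fin m) (Fin p) ℝ}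
    {a c : ℝ} (hc : 0 ≤ c) (hca : 4 * c ≤ a)
    (h : a / 2 * frobSq (v - w) ≤ c * frobInner (v - w) (2 • v - u)) :
    c * frobSq w + (a - 3 * c) * frobSq (v - w)
      ≤ c * frobSq v + (a - 3 * c) * frobSq (u - v) := by
  have huw := mul_nonneg hc (frobSq_nonneg (u - w))
  have hvw := mul_nonneg hc (frobSq_nonneg (v - w))
  have huv := mul_nonneg (sub_nonneg.2 hca) (frobSq_nonneg (u - v))
  simp only [frobSq_eq_frobInner, frobInner_sub_left, frobInner_sub_right,
    frobInner_nsmul_right] at *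
  rw [frobInner_comm v u, frobInner_comm w u, frobInner_comm w v] at *
  push_cast at *
  linear_combination 2 * h + huw + hvw + huv

theorem mirrorExtra_sub_succ_eq {R : Type*} [CommRing R] {m n p : Type*} [Fintype m]
    [Fintype n] {U : Matrix m n R} {r : Matrix n p R} {c : R} {x y : ℕ → Matrix n p R}
    {q : ℕ → Matrix m p R}
    (hx : ∀ k, x (k + 1) - r + c • (Uᵀ * q (k + 1)) - c • (Uᵀ * U * (y (k + 1) - y k)) = 0)
    (hq : ∀ k, q (k + 1) = q k + U * y (k + 1)) (k : ℕ) :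
    x (k + 1) - x (k + 2) = c • (Uᵀ * U * (2 • y (k + 1) - y k)) := by
  have h₁ := hx k
  have h₂ := hx (k + 1)
  rw [hq (k + 1)] at h₂
  simp only [Matrix.mul_add, Matrix.mul_sub, Matrix.mul_assoc, two_nsmul] at h₁ h₂ ⊢
  linear_combination (norm := module) h₁ - h₂

theorem stmt_15_general (n p : ℕ)
    (U : Matrix (Fin (n - 1)) (Fin n) ℝ)
    (r : Matrix (Fin n) (Fin p) ℝ)
    (f : Fin n → (Fin p → ℝ) → ℝ)
    (g : Fin n → (Fin p → ℝ) → (Fin p → ℝ))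
    -- each `fᵢ` is differentiable with gradient `g i`
    (hgrad : ∀ i (u : Fin p → ℝ),
      HasGradientAt (fun v : EuclideanSpace ℝ (Fin p) => f i ((WithLp.equiv 2 (Fin p → ℝ)) v))
        ((WithLp.equiv 2 (Fin p → ℝ)).symm (g i u))
        ((WithLp.equiv 2 (Fin p → ℝ)).symm u))
    -- each `fᵢ` is convex
    (hconv : ∀ i, ConvexOn ℝ Set.univ (f i))
    (Li : Fin n → ℝ) (hLpos : ∀ i, 0 < Li i)
    -- each `∇fᵢ` is `Lᵢ`-Lipschitz
    (hlip : ∀ i (u v : Fin p → ℝ), enormSq (g i u - g i v) ≤ (Li i) ^ 2 * enormSq (u - v))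
    -- `L = maxᵢ Lᵢ`
    (L : ℝ) (hL : IsGreatest (Set.range Li) L)
    -- `λ_max(𝕃)`: the largest eigenvalue of `𝕃 = UᵀU`
    (lmax : ℝ)
    (hlmax_max : ∀ (ν : ℝ) (v : Fin n → ℝ), v ≠ 0 → (Uᵀ * U).mulVec v = ν • v → ν ≤ lmax)
    (c : ℝ) (hc0 : 0 < c) (hc1 : c < 1 / (2 * L * lmax))
    -- a Mirror-EXTRA trajectory
    (x : ℕ → Matrix (Fin n) (Fin p) ℝ) (q : ℕ → Matrix (Fin (n - 1)) (Fin p) ℝ)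
    (hrec1 : ∀ k : ℕ,
      x (k + 1) - r + c • (Uᵀ * q (k + 1))
        - c • ((Uᵀ * U) * (gradMat g (x (k + 1)) - gradMat g (x k))) = 0)
    (hrec2 : ∀ k : ℕ, q (k + 1) = q k + U * gradMat g (x (k + 1))) :
    ∀ k : ℕ,
      c * frobSq (q (k + 1) - q (k + 2))
        + (2 / (L * lmax) - 3 * c) *
            wSq (Uᵀ * U) (gradMat g (x (k + 1)) - gradMat g (x (k + 2))) ≤
      c * frobSq (q k - q (k + 1))
        + (2 / (L * lmax) - 3 * c) *
            wSq (Uᵀ * U) (gradMat g (x k) - gradMat g (x (k + 1))) := by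
  intro k
  have hL0 : 0 < L := by
    obtain ⟨i, rfl⟩ := hL.1
    exact hLpos i
  have hlmax0 : 0 < lmax :=
    pos_of_mul_pos_right (one_div_pos.1 (hc0.trans hc1)) (by positivity)
  set A := gradMat g (x k)
  set B := gradMat g (x (k + 1))
  set C := gradMat g (x (k + 2))
  have hPSD : (lmax • 1 - Uᵀ * U).PosSemidef :=
    (isHermitian_conjTranspose_mul_self U : (Uᵀ * U).IsHermitian).posSemidef_smul_one_sub hlmax_max
  have hstep : 2 / (L * lmax) / 2 * frobSq (U * B - U * C)
      ≤ c * frobInner (U * B - U * C) (2 • (U * B) - U * A) := calc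
    _ = 1 / L * (wSq (Uᵀ * U) (B - C) / lmax) := by
      rw [wSq_transpose_mul_self, Matrix.mul_sub]
      field_simp
    _ ≤ 1 / L * frobSq (B - C) := by
      gcongr
      exact div_le_of_le_mul₀ hlmax0.le (frobSq_nonneg _)
        ((wSq_le_mul_frobSq hPSD _).trans_eq (mul_comm _ _))
    _ ≤ frobInner (B - C) (x (k + 1) - x (k + 2)) :=
      frobSq_gradMat_sub_le_frobInner hgrad hconv hLpos hlip (fun i => hL.2 (mem_range_self i)) _ _
    _ = _ := by
      rw [mirrorExtra_sub_succ_eq (y := fun j => gradMat g (x j)) hrec1 hrec2,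
        frobInner_smul_right, Matrix.mul_assoc, ← frobInner_mul_left, Matrix.mul_sub,
        Matrix.mul_sub, Matrix.mul_smul]
  have h4c : 4 * c ≤ 2 / (L * lmax) := by
    linarith [show 4 * (1 / (2 * L * lmax)) = 2 / (L * lmax) by ring]
  have hq : ∀ j, q j - q (j + 1) = -(U * gradMat g (x (j + 1))) := fun j => by
    rw [hrec2 j]
    abel
  rw [hq, hq, frobSq_neg, frobSq_neg, wSq_transpose_mul_self, wSq_transpose_mul_self,
    Matrix.mul_sub, Matrix.mul_sub]
  exact weighted_frobSq_le_of_le_frobInner hc0.le h4c hstep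

/-- Monotonic successive difference of Mirror-EXTRA (Lemma 7). -/
theorem stmt_15 (n p : ℕ) (hn : 2 ≤ n) (hp : 1 ≤ p)
    (U : Matrix (Fin (n - 1)) (Fin n) ℝ)
    (hU : ∀ v : Fin n → ℝ, U.mulVec v = 0 ↔ ∃ a : ℝ, v = fun _ => a)
    (r : Matrix (Fin n) (Fin p) ℝ)
    (f : Fin n → (Fin p → ℝ) → ℝ)
    (g : Fin n → (Fin p → ℝ) → (Fin p → ℝ))
    -- each `fᵢ` is differentiable with gradient `g i`
    (hgrad : ∀ i (u : Fin p → ℝ),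
      HasGradientAt (fun v : EuclideanSpace ℝ (Fin p) => f i ((WithLp.equiv 2 (Fin p → ℝ)) v))
        ((WithLp.equiv 2 (Fin p → ℝ)).symm (g i u))
        ((WithLp.equiv 2 (Fin p → ℝ)).symm u))
    -- each `fᵢ` is convex
    (hconv : ∀ i, ConvexOn ℝ Set.univ (f i))
    (Li : Fin n → ℝ) (hLpos : ∀ i, 0 < Li i)
    -- each `∇fᵢ` is `Lᵢ`-Lipschitz
    (hlip : ∀ i (u v : Fin p → ℝ), enormSq (g i u - g i v) ≤ (Li i) ^ 2 * enormSq (u - v))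
    -- `L = maxᵢ Lᵢ`
    (L : ℝ) (hL : IsGreatest (Set.range Li) L)
    -- `λ_max(𝕃)`: the largest eigenvalue of `𝕃 = UᵀU`
    (lmax : ℝ)
    (hlmax_eig : ∃ v : Fin n → ℝ, v ≠ 0 ∧ (Uᵀ * U).mulVec v = lmax • v)
    (hlmax_max : ∀ (ν : ℝ) (v : Fin n → ℝ), v ≠ 0 → (Uᵀ * U).mulVec v = ν • v → ν ≤ lmax)
    (c : ℝ) (hc0 : 0 < c) (hc1 : c < 1 / (2 * L * lmax))
    -- a Mirror-EXTRA trajectory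
    (x : ℕ → Matrix (Fin n) (Fin p) ℝ) (q : ℕ → Matrix (Fin (n - 1)) (Fin p) ℝ)
    (hrec1 : ∀ k : ℕ,
      x (k + 1) - r + c • (Uᵀ * q (k + 1))
        - c • ((Uᵀ * U) * (gradMat g (x (k + 1)) - gradMat g (x k))) = 0)
    (hrec2 : ∀ k : ℕ, q (k + 1) = q k + U * gradMat g (x (k + 1))) :
    ∀ k : ℕ,
      c * frobSq (q (k + 1) - q (k + 2))
        + (2 / (L * lmax) - 3 * c) *
            wSq (Uᵀ * U) (gradMat g (x (k + 1)) - gradMat g (x (k + 2))) ≤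
      c * frobSq (q k - q (k + 1))
        + (2 / (L * lmax) - 3 * c) *
            wSq (Uᵀ * U) (gradMat g (x k) - gradMat g (x (k + 1))) :=
  stmt_15_general n p U r f g hgrad hconv Li hLpos hlip L hL lmax hlmax_max c hc0 hc1 x q hrec1
    hrec2
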